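/- arXiv:2312.16615 — 7 statements merged into one kernel-verified Lean document; each statement's English description precedes it below -/
import Mathlib

section
/- For 0 ≤ a₁ < a₂ ≤ 1/2, the two-point distortion error V(a₁,a₂) = (1/2)[∫₀^{2(a₁+a₂)} ((x-a₁)²+3a₁²) dx + ∫_{2(a₁+a₂)}^{2} ((x-a₂)²+3a₂²) dx] equals 2a₁³ + 2a₂a₁² - 2a₂²a₁ - 2(a₂-1)²a₂ + 4/3, and its minimum value is 49/48, attained at a₁ = 1/8, a₂ = 3/8. -/
open intervalIntegral in
theorem integral_sq_sub_add_const (a b c d : ℝ) :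
    ∫ x in a..b, ((x - c)^2 + d) = ((b - c)^3 - (a - c)^3) / 3 + d * (b - a) := by
  rw [integral_comp_sub_right (fun x => x^2 + d) c,
    integral_add (intervalIntegrable_pow 2) intervalIntegrable_const, integral_pow,
    integral_const, smul_eq_mul]
  ring

theorem twoPointError_eq (a₁ a₂ : ℝ) :
    (1/2) * ((∫ x in (0:ℝ)..(2*(a₁+a₂)), ((x - a₁)^2 + 3*a₁^2)) +
        ∫ x in (2*(a₁+a₂))..(2:ℝ), ((x - a₂)^2 + 3*a₂^2)) =
      2*a₁^3 + 2*a₂*a₁^2 - 2*a₂^2*a₁ - 2*(a₂ - 1)^2*a₂ + 4/3 := by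
  simp only [integral_sq_sub_add_const]
  ring

/- In the coordinates s = a₁ + a₂, t = a₂ - a₁ the cubic is -2s²t + (s + t)² - (s + t) + 4/3,
a quadratic in s with leading coefficient 1 - 2t; completing the square in s gives the identity. -/
theorem twoPointError_sub_min_eq (a₁ a₂ : ℝ) :
    2*a₁^3 + 2*a₂*a₁^2 - 2*a₂^2*a₁ - 2*(a₂ - 1)^2*a₂ + 4/3 - 49/48 =
      (1 - 2*(a₂ - a₁)) * (a₁ + a₂ - 1/2)^2 + (a₂ - a₁ - 1/4)^2 := by
  ring

theorem min_le_twoPointError {a₁ a₂ : ℝ} (h : a₂ - a₁ ≤ 1/2) :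
    49/48 ≤ 2*a₁^3 + 2*a₂*a₁^2 - 2*a₂^2*a₁ - 2*(a₂ - 1)^2*a₂ + 4/3 := by
  have hs : 0 ≤ (1 - 2*(a₂ - a₁)) * (a₁ + a₂ - 1/2)^2 :=
    mul_nonneg (by linarith) (sq_nonneg _)
  linarith [twoPointError_sub_min_eq a₁ a₂, sq_nonneg (a₂ - a₁ - 1/4)]

/-- Two-point distortion error with both points on side OB. -/
theorem stmt2 :
    let V : ℝ → ℝ → ℝ := fun a₁ a₂ =>
      (1/2) * ((∫ x in (0:ℝ)..(2*(a₁+a₂)), ((x - a₁)^2 + 3*a₁^2)) +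
        ∫ x in (2*(a₁+a₂))..(2:ℝ), ((x - a₂)^2 + 3*a₂^2))
    (∀ a₁ a₂ : ℝ, 0 ≤ a₁ → a₁ < a₂ → a₂ ≤ 1/2 →
      V a₁ a₂ = 2*a₁^3 + 2*a₂*a₁^2 - 2*a₂^2*a₁ - 2*(a₂ - 1)^2*a₂ + 4/3) ∧
    V (1/8) (3/8) = 49/48 ∧
    (∀ a₁ a₂ : ℝ, 0 ≤ a₁ → a₁ < a₂ → a₂ ≤ 1/2 → 49/48 ≤ V a₁ a₂) := by
  intro V
  have hV : ∀ a₁ a₂, V a₁ a₂ = 2*a₁^3 + 2*a₂*a₁^2 - 2*a₂^2*a₁ - 2*(a₂ - 1)^2*a₂ + 4/3 :=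
    twoPointError_eq
  refine ⟨fun a₁ a₂ _ _ _ => hV a₁ a₂, by rw [hV]; norm_num, fun a₁ a₂ h₀ _ h₁ => ?_⟩
  rw [hV]
  exact min_le_twoPointError (by linarith)
end

section
/- The optimal set of two points for the uniform distribution on [0,2] with constraint S = S₁ ∪ S₂ (the two slanted sides of the equilateral triangle O(0,0), A(2,0), B(1,√3)) is {(1/8, √3/8), (15/8, √3/8)}, with second constrained quantization error V₂ = 13/48. -/
open scoped Classical

/-- Distortion error of a finite set w.r.t. the uniform distribution on the base `[0,2]`,
using the squared Euclidean distance `rho((x,0),(a,b)) = (x-a)^2 + b^2`. -/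
noncomputable def distortion (α : Finset (ℝ × ℝ)) : ℝ :=
  (1/2) * ∫ x in (0:ℝ)..2, sInf ((fun p : ℝ × ℝ => (x - p.1)^2 + p.2^2) '' (α : Set (ℝ × ℝ)))

/-- The side `OB` of the equilateral triangle `O(0,0)`, `A(2,0)`, `B(1,√3)`. -/
def S1 : Set (ℝ × ℝ) := {p | ∃ x : ℝ, 0 ≤ x ∧ x ≤ 1 ∧ p = (x, Real.sqrt 3 * x)}

/-- The side `AB` of the equilateral triangle. -/
def S2 : Set (ℝ × ℝ) := {p | ∃ x : ℝ, 1 ≤ x ∧ x ≤ 2 ∧ p = (x, -(Real.sqrt 3) * (x - 2))}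

/-- The `n`-th constrained quantization error with constraint `S1 ∪ S2`. -/
noncomputable def V (n : ℕ) : ℝ :=
  sInf {v | ∃ α : Finset (ℝ × ℝ), ↑α ⊆ S1 ∪ S2 ∧ 1 ≤ α.card ∧ α.card ≤ n ∧ v = distortion α}

/-!
A point of `S1` is `(t, √3 t)` and a point of `S2` is `(2 - t, √3 t)`, with `t ≤ 1`; its squared
distance to `(x, 0)` is `sqDistS1 t x = (x - t)² + 3t²`, resp. `sqDistS1 t (2 - x)`.
Since `∫₀ᶜ sqDistS1 t = 13c³/48 + c (c/4 - 2t)²`, a point of `S1` serving the cell `[0, c]`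
costs at least `13c³/48`, with equality only at `t = c/8`. For one point on each side the
difference of the two distance functions is increasing, so the Voronoi cells are `[0, c]` and
`[c, 2]`, and twice the error is at least `13/48 (c³ + (2 - c)³) ≥ 13/24`, with equality only for
`c = 1`, i.e. for the points `(1/8, √3/8)` and `(15/8, √3/8)`. Two points on the same side do
much worse, since `sqDistS1 t x ≥ 3x²/4`.
-/

open MeasureTheory Set intervalIntegral

lemma exists_crossing_of_monotoneOn {h : ℝ → ℝ} {a b : ℝ} (hab : a ≤ b)
    (hcont : ContinuousOn h (Icc a b)) (hmono : MonotoneOn h (Icc a b)) :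
    ∃ c ∈ Icc a b, (∀ x ∈ Ioc a c, h x ≤ 0) ∧ ∀ x ∈ Ioc c b, 0 ≤ h x := by
  have ha : a ∈ Icc a b := left_mem_Icc.2 hab
  have hb : b ∈ Icc a b := right_mem_Icc.2 hab
  by_cases hhb : h b ≤ 0
  · refine ⟨b, hb, fun x hx => (hmono (Ioc_subset_Icc_self hx) hb hx.2).trans hhb, ?_⟩
    simp
  by_cases hha : 0 ≤ h a
  · refine ⟨a, ha, by simp, fun x hx => hha.trans (hmono ha (Ioc_subset_Icc_self hx) hx.1.le)⟩
  obtain ⟨c, hc, hc0⟩ := intermediate_value_Icc hab hcont ⟨(not_le.1 hha).le, (not_le.1 hhb).le⟩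
  refine ⟨c, hc, fun x hx => ?_, fun x hx => ?_⟩
  · exact hc0 ▸ hmono ⟨hx.1.le, hx.2.trans hc.2⟩ hc hx.2
  · exact hc0 ▸ hmono hc ⟨hc.1.trans hx.1.le, hx.2⟩ hx.1.le

lemma integral_min_eq_add_of_crossing {f g : ℝ → ℝ} {a b c : ℝ}
    (hf : Continuous f) (hg : Continuous g) (hac : a ≤ c) (hcb : c ≤ b)
    (hfg : ∀ x ∈ Ioc a c, f x ≤ g x) (hgf : ∀ x ∈ Ioc c b, g x ≤ f x) :
    ∫ x in a..b, min (f x) (g x) = (∫ x in a..c, f x) + ∫ x in c..b, g x := by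
  have hmin : Continuous fun x => min (f x) (g x) := hf.min hg
  rw [← integral_add_adjacent_intervals (hmin.intervalIntegrable a c)
    (hmin.intervalIntegrable c b)]
  congr 1
  · refine integral_congr_ae (.of_forall fun x hx => min_eq_left (hfg x ?_))
    rwa [uIoc_of_le hac] at hx
  · refine integral_congr_ae (.of_forall fun x hx => min_eq_right (hgf x ?_))
    rwa [uIoc_of_le hcb] at hx

lemma exists_integral_min_eq_add {f g : ℝ → ℝ} {a b : ℝ} (hab : a ≤ b)
    (hf : Continuous f) (hg : Continuous g) (hmono : Monotone fun x => f x - g x) :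
    ∃ c ∈ Icc a b, ∫ x in a..b, min (f x) (g x) = (∫ x in a..c, f x) + ∫ x in c..b, g x := by
  obtain ⟨c, hc, hfg, hgf⟩ :=
    exists_crossing_of_monotoneOn hab (hf.sub hg).continuousOn (hmono.monotoneOn _)
  exact ⟨c, hc, integral_min_eq_add_of_crossing hf hg hc.1 hc.2
    (fun x hx => sub_nonpos.1 (hfg x hx)) (fun x hx => sub_nonneg.1 (hgf x hx))⟩

/-- The squared distance from `(x, 0)` to the point `(t, √3 t)` of the line through `S1`. -/
def sqDistS1 (t x : ℝ) : ℝ := (x - t) ^ 2 + 3 * t ^ 2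

lemma continuous_sqDistS1 (t : ℝ) : Continuous (sqDistS1 t) := by
  unfold sqDistS1; fun_prop

lemma sqDist_eq_sqDistS1_of_mem {p : ℝ × ℝ} (hp : p ∈ S1 ∪ S2) :
    ∃ t ≤ 1, (∀ x, (x - p.1) ^ 2 + p.2 ^ 2 = sqDistS1 t x) ∨
      ∀ x, (x - p.1) ^ 2 + p.2 ^ 2 = sqDistS1 t (2 - x) := by
  have h3 : Real.sqrt 3 ^ 2 = 3 := Real.sq_sqrt (by norm_num)
  rcases hp with ⟨t, -, ht, rfl⟩ | ⟨s, hs, -, rfl⟩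
  · exact ⟨t, ht, .inl fun x => by simp only [sqDistS1]; rw [mul_pow, h3]⟩
  · refine ⟨2 - s, by linarith, .inr fun x => ?_⟩
    simp only [sqDistS1]; rw [mul_pow, neg_sq, h3]; ring

lemma integral_sqDistS1 (t c : ℝ) :
    ∫ x in (0:ℝ)..c, sqDistS1 t x = c ^ 3 / 3 - c ^ 2 * t + 4 * c * t ^ 2 := by
  simp only [sqDistS1]
  rw [integral_add ((by fun_prop : Continuous fun x : ℝ => (x - t) ^ 2).intervalIntegrable _ _)
    intervalIntegrable_const, integral_comp_sub_right (· ^ 2) t, integral_pow,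
    intervalIntegral.integral_const, smul_eq_mul]
  push_cast
  ring

lemma integral_sqDistS1_ge (t : ℝ) {c : ℝ} (hc : 0 ≤ c) :
    13 / 48 * c ^ 3 ≤ ∫ x in (0:ℝ)..c, sqDistS1 t x := by
  rw [integral_sqDistS1]
  nlinarith [mul_nonneg hc (sq_nonneg (c / 4 - 2 * t))]

lemma integral_sqDistS1_reflect (t c : ℝ) :
    ∫ x in c..2, sqDistS1 t (2 - x) = ∫ x in (0:ℝ)..2 - c, sqDistS1 t x := by
  rw [integral_comp_sub_left (sqDistS1 t), sub_self]

lemma integral_min_sqDistS1_ge (t s : ℝ) :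
    13 / 24 ≤ ∫ x in (0:ℝ)..2, min (sqDistS1 t x) (sqDistS1 s x) := by
  have hle : ∀ r x, 3 / 4 * x ^ 2 ≤ sqDistS1 r x := fun r x => by
    simp only [sqDistS1]; nlinarith [sq_nonneg (x - 4 * r)]
  calc (13 / 24 : ℝ) ≤ ∫ x in (0:ℝ)..2, 3 / 4 * x ^ 2 := by
        rw [intervalIntegral.integral_const_mul, integral_pow]; norm_num
    _ ≤ _ := integral_mono_on zero_le_two
        ((by fun_prop : Continuous fun x : ℝ => 3 / 4 * x ^ 2).intervalIntegrable _ _)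
        (((continuous_sqDistS1 t).min (continuous_sqDistS1 s)).intervalIntegrable _ _)
        fun x _ => le_min (hle t x) (hle s x)

lemma integral_min_sqDistS1_reflect_ge {t s : ℝ} (ht : t ≤ 1) (hs : s ≤ 1) :
    13 / 24 ≤ ∫ x in (0:ℝ)..2, min (sqDistS1 t x) (sqDistS1 s (2 - x)) := by
  have hmono : Monotone fun x => sqDistS1 t x - sqDistS1 s (2 - x) := by
    intro x y hxy
    simp only [sqDistS1]
    nlinarith [mul_nonneg (sub_nonneg.2 hxy) (by linarith : (0:ℝ) ≤ 2 - t - s)]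
  obtain ⟨c, hc, heq⟩ := exists_integral_min_eq_add (g := fun x => sqDistS1 s (2 - x))
    zero_le_two (continuous_sqDistS1 t) ((continuous_sqDistS1 s).comp (continuous_sub_left 2))
    hmono
  rw [heq, integral_sqDistS1_reflect]
  have := integral_sqDistS1_ge t hc.1
  have := integral_sqDistS1_ge s (sub_nonneg.2 hc.2)
  nlinarith [sq_nonneg (c - 1)]

lemma distortion_pair (p q : ℝ × ℝ) :
    distortion {p, q} =
      1 / 2 * ∫ x in (0:ℝ)..2, min ((x - p.1) ^ 2 + p.2 ^ 2) ((x - q.1) ^ 2 + q.2 ^ 2) := by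
  simp only [distortion, Finset.coe_insert, Finset.coe_singleton, image_insert_eq,
    image_singleton, csInf_pair]

lemma le_distortion_pair {p q : ℝ × ℝ} (hp : p ∈ S1 ∪ S2) (hq : q ∈ S1 ∪ S2) :
    13 / 48 ≤ distortion {p, q} := by
  rw [distortion_pair]
  suffices 13 / 24 ≤ ∫ x in (0:ℝ)..2, min ((x - p.1) ^ 2 + p.2 ^ 2) ((x - q.1) ^ 2 + q.2 ^ 2) by
    linarith
  obtain ⟨t, ht, hpt | hpt⟩ := sqDist_eq_sqDistS1_of_mem hp <;>
    obtain ⟨s, hs, hqs | hqs⟩ := sqDist_eq_sqDistS1_of_mem hq <;> simp only [hpt, hqs]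
  · exact integral_min_sqDistS1_ge t s
  · exact integral_min_sqDistS1_reflect_ge ht hs
  · simpa only [min_comm] using integral_min_sqDistS1_reflect_ge hs ht
  · simpa only [integral_comp_sub_left (fun x => min (sqDistS1 t x) (sqDistS1 s x)), sub_self,
      sub_zero] using integral_min_sqDistS1_ge t s

lemma Finset.exists_eq_pair_of_card_le_two {α : Type*} [DecidableEq α] {s : Finset α}
    (h1 : 1 ≤ s.card) (h2 : s.card ≤ 2) : ∃ a b, s = {a, b} := by
  obtain h | h : s.card = 1 ∨ s.card = 2 := by omega
  · obtain ⟨a, rfl⟩ := Finset.card_eq_one.1 h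
    exact ⟨a, a, by simp⟩
  · obtain ⟨a, b, -, rfl⟩ := Finset.card_eq_two.1 h
    exact ⟨a, b, rfl⟩

lemma le_distortion {α : Finset (ℝ × ℝ)} (hα : ↑α ⊆ S1 ∪ S2) (h1 : 1 ≤ α.card)
    (h2 : α.card ≤ 2) : 13 / 48 ≤ distortion α := by
  obtain ⟨p, q, rfl⟩ := Finset.exists_eq_pair_of_card_le_two h1 h2
  exact le_distortion_pair (hα (by simp)) (hα (by simp))

lemma distortion_optimal :
    distortion {((1/8 : ℝ), Real.sqrt 3 / 8), ((15/8 : ℝ), Real.sqrt 3 / 8)} = 13/48 := by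
  have h3 : Real.sqrt 3 ^ 2 = 3 := Real.sq_sqrt (by norm_num)
  have hp : ∀ x : ℝ, (x - 1 / 8) ^ 2 + (Real.sqrt 3 / 8) ^ 2 = sqDistS1 (1 / 8) x := fun x => by
    rw [sqDistS1, div_pow, h3]; ring
  have hq : ∀ x : ℝ, (x - 15 / 8) ^ 2 + (Real.sqrt 3 / 8) ^ 2 = sqDistS1 (1 / 8) (2 - x) :=
    fun x => by rw [sqDistS1, div_pow, h3]; ring
  rw [distortion_pair]
  simp only [hp, hq]
  rw [integral_min_eq_add_of_crossing (f := sqDistS1 (1 / 8))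
    (g := fun x => sqDistS1 (1 / 8) (2 - x)) (continuous_sqDistS1 _)
    ((continuous_sqDistS1 _).comp (continuous_sub_left 2)) zero_le_one one_le_two
    (fun x hx => by simp only [sqDistS1]; nlinarith [hx.2])
    (fun x hx => by simp only [sqDistS1]; nlinarith [hx.1]),
    integral_sqDistS1_reflect, integral_sqDistS1, integral_sqDistS1]
  norm_num

lemma optimal_subset :
    (↑({((1/8 : ℝ), Real.sqrt 3 / 8), ((15/8 : ℝ), Real.sqrt 3 / 8)} : Finset (ℝ × ℝ)) :
      Set (ℝ × ℝ)) ⊆ S1 ∪ S2 := by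
  intro p hp
  simp only [Finset.coe_insert, Finset.coe_singleton, mem_insert_iff, mem_singleton_iff] at hp
  rcases hp with rfl | rfl
  · exact .inl ⟨1 / 8, by norm_num, by norm_num, Prod.ext rfl (by ring)⟩
  · exact .inr ⟨15 / 8, by norm_num, by norm_num, Prod.ext rfl (by ring)⟩

lemma card_optimal :
    ({((1/8 : ℝ), Real.sqrt 3 / 8), ((15/8 : ℝ), Real.sqrt 3 / 8)} : Finset (ℝ × ℝ)).card = 2 :=
  Finset.card_pair (by norm_num [Prod.ext_iff])

/-- The optimal set of two points is {(1/8, √3/8), (15/8, √3/8)} with V₂ = 13/48. -/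
theorem stmt4 :
    V 2 = 13/48 ∧
    distortion {((1/8 : ℝ), Real.sqrt 3 / 8), ((15/8 : ℝ), Real.sqrt 3 / 8)} = 13/48 := by
  refine ⟨IsLeast.csInf_eq ⟨⟨_, optimal_subset, by rw [card_optimal]; norm_num,
    card_optimal.le, distortion_optimal.symm⟩, ?_⟩, distortion_optimal⟩
  rintro v ⟨α, hα, h1, h2, rfl⟩
  exact le_distortion hα h1 h2
end

section
/- For 0 ≤ a₁ < a₂ < a₃ ≤ 1/2, the three-point distortion error with all points on side OB equals 2a₁³ + 2a₂a₁² - 2a₂²a₁ - 2a₃³ - 2(a₂-2)a₃² + 2(a₂²-1)a₃ + 4/3, and its minimum value is 109/108, attained at a₁ = 1/12, a₂ = 1/4, a₃ = 5/12. -/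
/-!
Each piece of the distortion is the integral of a quadratic in `x`, so the distortion is the cubic
polynomial `sideDistortion`. On the region `0 ≤ a₁ ≤ a₂ ≤ a₃ ≤ 1/2` the cubic minus `109/108` is a
sum of three terms `λ (u - v)² w` with `w ≥ 0`, each vanishing at `(1/12, 1/4, 5/12)`.
-/

theorem integral_sq_sub_add_three_mul_sq (a b c : ℝ) :
    ∫ x in a..b, ((x - c)^2 + 3*c^2) = ((b - c)^3 - (a - c)^3)/3 + 3*c^2*(b - a) := by
  have hsq : IntervalIntegrable (fun x : ℝ => (x - c)^2) MeasureTheory.volume a b :=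
    (by fun_prop : Continuous fun x : ℝ => (x - c)^2).intervalIntegrable _ _
  rw [intervalIntegral.integral_add hsq intervalIntegrable_const,
    intervalIntegral.integral_comp_sub_right (· ^ 2), integral_pow,
    intervalIntegral.integral_const, smul_eq_mul]
  ring

noncomputable def sideDistortion (a₁ a₂ a₃ : ℝ) : ℝ :=
  2*a₁^3 + 2*a₂*a₁^2 - 2*a₂^2*a₁ - 2*a₃^3 - 2*(a₂ - 2)*a₃^2 + 2*(a₂^2 - 1)*a₃ + 4/3

theorem sideDistortion_sub_eq (a₁ a₂ a₃ : ℝ) :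
    sideDistortion a₁ a₂ a₃ - 109/108 =
      2*(a₁ - a₂/3)^2*(a₁ + 5*a₂/3) + 10/27*(a₂ - 3*a₃/5)^2*(21*a₃/5 - a₂)
        + 64/25*(a₃ - 5/12)^2*(35/48 - a₃) := by
  unfold sideDistortion
  ring

theorem le_sideDistortion {a₁ a₂ a₃ : ℝ} (h₁ : 0 ≤ a₁) (h₁₂ : a₁ ≤ a₂) (h₂₃ : a₂ ≤ a₃)
    (h₃ : a₃ ≤ 1/2) : 109/108 ≤ sideDistortion a₁ a₂ a₃ := by
  have := sideDistortion_sub_eq a₁ a₂ a₃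
  have t₁ : 0 ≤ 2*(a₁ - a₂/3)^2*(a₁ + 5*a₂/3) := mul_nonneg (by positivity) (by linarith)
  have t₂ : 0 ≤ 10/27*(a₂ - 3*a₃/5)^2*(21*a₃/5 - a₂) := mul_nonneg (by positivity) (by linarith)
  have t₃ : 0 ≤ 64/25*(a₃ - 5/12)^2*(35/48 - a₃) := mul_nonneg (by positivity) (by linarith)
  linarith

/-- Three-point distortion error with all points on side OB. -/
theorem stmt5 :
    let V : ℝ → ℝ → ℝ → ℝ := fun a₁ a₂ a₃ =>
      (1/2) * ((∫ x in (0:ℝ)..(2*(a₁+a₂)), ((x - a₁)^2 + 3*a₁^2)) +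
        (∫ x in (2*(a₁+a₂))..(2*(a₂+a₃)), ((x - a₂)^2 + 3*a₂^2)) +
        ∫ x in (2*(a₂+a₃))..(2:ℝ), ((x - a₃)^2 + 3*a₃^2))
    (∀ a₁ a₂ a₃ : ℝ, 0 ≤ a₁ → a₁ < a₂ → a₂ < a₃ → a₃ ≤ 1/2 →
      V a₁ a₂ a₃ = 2*a₁^3 + 2*a₂*a₁^2 - 2*a₂^2*a₁ - 2*a₃^3 - 2*(a₂ - 2)*a₃^2
        + 2*(a₂^2 - 1)*a₃ + 4/3) ∧
    V (1/12) (1/4) (5/12) = 109/108 ∧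
    (∀ a₁ a₂ a₃ : ℝ, 0 ≤ a₁ → a₁ < a₂ → a₂ < a₃ → a₃ ≤ 1/2 → 109/108 ≤ V a₁ a₂ a₃) := by
  intro V
  have hV (a₁ a₂ a₃ : ℝ) : V a₁ a₂ a₃ = sideDistortion a₁ a₂ a₃ := by
    simp only [V, integral_sq_sub_add_three_mul_sq, sideDistortion]
    ring
  refine ⟨fun a₁ a₂ a₃ _ _ _ _ => hV a₁ a₂ a₃, ?_, ?_⟩
  · rw [hV, sideDistortion]
    norm_num
  · intro a₁ a₂ a₃ h₁ h₁₂ h₂₃ h₃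
    rw [hV]
    exact le_sideDistortion h₁ h₁₂.le h₂₃.le h₃
end

section
/- The four-point configuration with a₁ = 1/16, a₂ = 3/16 on side OB and b₁ = 31/16, b₂ = 29/16 on side AB achieves distortion error 49/192, and this is the optimal constrained quantization error V₄ for the uniform distribution on [0,2] with constraint S₁ ∪ S₂. -/
open scoped Classical

/-!
Completing the square, the point `(a, √3 a)` of `OB` is at squared distance
`(3/4) x² + (x - 4a)² / 4` from `(x, 0)`, and symmetrically (about `x = 2`) the point
`(b, -√3 (b - 2))` of `AB` is at squared distance `(3/4) (2 - x)² + (x - (4b - 6))² / 4`.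
So the distortion of an admissible set of `n` points is at least `(1/2) ∫₀² (3/4) min(x, 2 - x)²`
plus a quarter of the one-dimensional quantization error of `n` centres on `[0, 2]`, which is
at least `2³ / (12 n²)`. For `n = 4` this gives `1/4 + 1/192 = 49/192`, attained by the
configuration whose centres are `1/4, 3/4, 5/4, 7/4`.
-/

open Set intervalIntegral MeasureTheory
open scoped Finset

lemma integral_sq_sub_add (a b u v : ℝ) :
    ∫ x in u..v, ((x - a) ^ 2 + b) = ((v - a) ^ 3 - (u - a) ^ 3) / 3 + b * (v - u) := by
  rw [integral_add (Continuous.intervalIntegrable (by fun_prop) _ _) intervalIntegrable_const,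
    integral_comp_sub_right (fun x => x ^ 2), integral_pow, intervalIntegral.integral_const,
    smul_eq_mul]
  ring

lemma sq_sub_le_sq_sub_iff {x a c : ℝ} :
    (x - c) ^ 2 ≤ (x - a) ^ 2 ↔ 0 ≤ (a - c) * (a + c - 2 * x) := by
  rw [← sub_nonneg, show (x - a) ^ 2 - (x - c) ^ 2 = (a - c) * (a + c - 2 * x) by ring]

lemma cube_div_twelve_le_integral {g : ℝ → ℝ} {u v c : ℝ} (huv : u ≤ v)
    (hg : IntervalIntegrable g volume u v) (hc : ∀ x ∈ Ioo u v, (x - c) ^ 2 ≤ g x) :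
    (v - u) ^ 3 / 12 ≤ ∫ x in u..v, g x := by
  have hsq : ∫ x in u..v, ((x - c) ^ 2 + 0) ≤ ∫ x in u..v, g x :=
    integral_mono_on_of_le_Ioo huv (Continuous.intervalIntegrable (by fun_prop) _ _) hg
      (by simpa using hc)
  rw [integral_sq_sub_add] at hsq
  nlinarith [mul_nonneg (sub_nonneg.2 huv) (sq_nonneg (u + v - 2 * c))]

lemma cube_add_div_sq_le {k s r : ℝ} (hk : 0 < k) (hs : 0 ≤ s) (hr : 0 ≤ r) :
    (s + r) ^ 3 / (k + 1) ^ 2 ≤ s ^ 3 / k ^ 2 + r ^ 3 := by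
  obtain ⟨σ, rfl⟩ : ∃ σ, s = k * σ := ⟨s / k, by field_simp⟩
  have hσ : 0 ≤ σ := nonneg_of_mul_nonneg_right (by linarith) hk
  rw [div_le_iff₀ (by positivity), show (k * σ) ^ 3 / k ^ 2 = k * σ ^ 3 by field_simp]
  -- the difference of the two sides is `k (σ - r)² ((2k + 1) σ + (k + 2) r)`
  nlinarith [mul_nonneg (mul_nonneg hk.le (sq_nonneg (σ - r)))
    (by positivity : 0 ≤ (2 * k + 1) * σ + (k + 2) * r)]

lemma cube_div_le_integral_of_split {g : ℝ → ℝ} {u t v k : ℝ} (hk : 0 < k) (hut : u ≤ t)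
    (htv : t ≤ v) (hg : IntervalIntegrable g volume u v)
    (hleft : (t - u) ^ 3 / (12 * k ^ 2) ≤ ∫ x in u..t, g x)
    (hright : (v - t) ^ 3 / 12 ≤ ∫ x in t..v, g x) :
    (v - u) ^ 3 / (12 * (k + 1) ^ 2) ≤ ∫ x in u..v, g x := by
  have ht : t ∈ uIcc u v := by simp [uIcc_of_le (hut.trans htv), hut, htv]
  rw [← integral_add_adjacent_intervals (hg.mono_set (uIcc_subset_uIcc_left ht))
    (hg.mono_set (uIcc_subset_uIcc_right ht))]
  calc (v - u) ^ 3 / (12 * (k + 1) ^ 2) = ((t - u) + (v - t)) ^ 3 / (k + 1) ^ 2 / 12 := by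
        rw [div_div, mul_comm _ (12 : ℝ), sub_add_sub_cancel']
    _ ≤ ((t - u) ^ 3 / k ^ 2 + (v - t) ^ 3) / 12 := by
        gcongr
        exact cube_add_div_sq_le hk (by linarith) (by linarith)
    _ = (t - u) ^ 3 / (12 * k ^ 2) + (v - t) ^ 3 / 12 := by ring
    _ ≤ _ := add_le_add hleft hright

theorem cube_div_le_integral_of_exists_sq_le (C : Finset ℝ) {g : ℝ → ℝ} {u v : ℝ} (huv : u ≤ v)
    (hg : IntervalIntegrable g volume u v) (hC : ∀ x ∈ Ioo u v, ∃ c ∈ C, (x - c) ^ 2 ≤ g x) :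
    (v - u) ^ 3 / (12 * (#C : ℝ) ^ 2) ≤ ∫ x in u..v, g x := by
  induction C using Finset.induction_on_max generalizing u v with
  | empty =>
    rcases huv.eq_or_lt with rfl | huv
    · simp
    · obtain ⟨c, hc, -⟩ := hC ((u + v) / 2) ⟨by linarith, by linarith⟩
      exact absurd hc (Finset.notMem_empty c)
  | insert a s has ih =>
    rw [Finset.card_insert_of_notMem fun h => (has a h).false, Nat.cast_succ]
    rcases s.eq_empty_or_nonempty with rfl | hs
    · refine (le_of_eq (by simp)).trans (cube_div_twelve_le_integral (c := a) huv hg fun x hx => ?_)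
      simpa using hC x hx
    -- the largest centre `a` serves only the points beyond its midpoint with the next one
    set c' := s.max' hs
    have hc'a : c' < a := has c' (s.max'_mem hs)
    set t := max u (min v ((a + c') / 2))
    have hut : u ≤ t := le_max_left _ _
    have htv : t ≤ v := max_le huv (min_le_left _ _)
    have hleft : ∀ x ∈ Ioo u t, ∃ c ∈ s, (x - c) ^ 2 ≤ g x := by
      intro x hx
      have hxm : 2 * x < a + c' := by
        have := (lt_max_iff.1 hx.2).resolve_left hx.1.not_gt
        linarith [min_le_right v ((a + c') / 2)]
      obtain ⟨c, hc, hcx⟩ := hC x ⟨hx.1, hx.2.trans_le htv⟩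
      rcases Finset.mem_insert.1 hc with rfl | hc
      · refine ⟨c', s.max'_mem hs, le_trans ?_ hcx⟩
        exact sq_sub_le_sq_sub_iff.2 (mul_nonneg (by linarith) (by linarith))
      · exact ⟨c, hc, hcx⟩
    have hright : ∀ x ∈ Ioo t v, (x - a) ^ 2 ≤ g x := by
      intro x hx
      have hmx : a + c' < 2 * x := by
        have := (min_lt_iff.1 (hx.1.trans_le' (le_max_right _ _))).resolve_left hx.2.not_gt
        linarith
      obtain ⟨c, hc, hcx⟩ := hC x ⟨hut.trans_lt hx.1, hx.2⟩
      rcases Finset.mem_insert.1 hc with rfl | hc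
      · exact hcx
      · have hcc' : c ≤ c' := s.le_max' c hc
        refine le_trans ?_ hcx
        exact sq_sub_le_sq_sub_iff.2 (mul_nonneg_of_nonpos_of_nonpos (by linarith) (by linarith))
    have ht : t ∈ uIcc u v := by simp [uIcc_of_le huv, hut, htv]
    exact cube_div_le_integral_of_split (by exact_mod_cast hs.card_pos) hut htv hg
      (ih hut (hg.mono_set (uIcc_subset_uIcc_left ht)) hleft)
      (cube_div_twelve_le_integral htv (hg.mono_set (uIcc_subset_uIcc_right ht)) hright)

-- The centre comes from completing the square (see the header); the vertex `B`, which lies on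
-- both sides, is treated as a point of `OB`.
noncomputable def baseCenter (p : ℝ × ℝ) : ℝ := if p.1 ≤ 1 then 4 * p.1 else 4 * p.1 - 6

lemma sq_sub_baseCenter_le {p : ℝ × ℝ} (hp : p ∈ S1 ∪ S2) {x : ℝ} (hx : x ∈ Icc 0 2) :
    (x - baseCenter p) ^ 2 ≤ 4 * ((x - p.1) ^ 2 + p.2 ^ 2) - 3 * min x (2 - x) ^ 2 := by
  have h3 : Real.sqrt 3 ^ 2 = 3 := Real.sq_sqrt (by norm_num)
  have hm : 0 ≤ min x (2 - x) := le_min hx.1 (by linarith [hx.2])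
  have hmx : min x (2 - x) ^ 2 ≤ x ^ 2 := pow_le_pow_left₀ hm (min_le_left _ _) 2
  have hmx' : min x (2 - x) ^ 2 ≤ (2 - x) ^ 2 := pow_le_pow_left₀ hm (min_le_right _ _) 2
  rcases hp with ⟨a, -, ha1, rfl⟩ | ⟨b, hb1, -, rfl⟩
  · simp only [baseCenter, if_pos ha1]
    nlinarith
  · rcases hb1.eq_or_lt with rfl | hb1
    · simp only [baseCenter, le_refl, if_true]
      nlinarith
    · simp only [baseCenter, if_neg hb1.not_ge]
      nlinarith

lemma integral_min_sub_sq : ∫ x in (0 : ℝ)..2, min x (2 - x) ^ 2 = 2 / 3 := by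
  have hint : ∀ a b : ℝ, IntervalIntegrable (fun x : ℝ => min x (2 - x) ^ 2) volume a b :=
    Continuous.intervalIntegrable (by fun_prop)
  have h1 : ∫ x in (0 : ℝ)..1, min x (2 - x) ^ 2 = ∫ x in (0 : ℝ)..1, x ^ 2 :=
    integral_congr fun x hx => by
      rw [uIcc_of_le zero_le_one] at hx
      simp only [min_eq_left (by linarith [hx.2] : x ≤ 2 - x)]
  have h2 : ∫ x in (1 : ℝ)..2, min x (2 - x) ^ 2 = ∫ x in (1 : ℝ)..2, (2 - x) ^ 2 :=
    integral_congr fun x hx => by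
      rw [uIcc_of_le one_le_two] at hx
      simp only [min_eq_right (by linarith [hx.1] : 2 - x ≤ x)]
  rw [← integral_add_adjacent_intervals (hint 0 1) (hint 1 2), h1, h2,
    integral_comp_sub_left (fun x => x ^ 2), integral_pow]
  norm_num

noncomputable def minSqDist (α : Finset (ℝ × ℝ)) (x : ℝ) : ℝ :=
  sInf ((fun p : ℝ × ℝ => (x - p.1) ^ 2 + p.2 ^ 2) '' (α : Set (ℝ × ℝ)))

section minSqDist

variable {α : Finset (ℝ × ℝ)}

lemma minSqDist_eq_inf' (hne : α.Nonempty) (x : ℝ) :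
    minSqDist α x = α.inf' hne fun p => (x - p.1) ^ 2 + p.2 ^ 2 :=
  (Finset.inf'_eq_csInf_image _ _ _).symm

lemma continuous_minSqDist (hne : α.Nonempty) : Continuous (minSqDist α) := by
  simp only [funext (minSqDist_eq_inf' hne)]
  exact Continuous.finset_inf'_apply hne fun _ _ => by fun_prop

lemma minSqDist_le {p : ℝ × ℝ} (hp : p ∈ α) (x : ℝ) :
    minSqDist α x ≤ (x - p.1) ^ 2 + p.2 ^ 2 := by
  rw [minSqDist_eq_inf' ⟨p, hp⟩]
  exact Finset.inf'_le _ hp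

lemma exists_mem_minSqDist_eq (hne : α.Nonempty) (x : ℝ) :
    ∃ p ∈ α, minSqDist α x = (x - p.1) ^ 2 + p.2 ^ 2 := by
  simpa only [minSqDist_eq_inf' hne] using α.exists_mem_eq_inf' hne _

end minSqDist

lemma distortion_eq_integral_minSqDist (α : Finset (ℝ × ℝ)) :
    distortion α = 1 / 2 * ∫ x in (0 : ℝ)..2, minSqDist α x :=
  rfl

theorem quarter_add_le_distortion {α : Finset (ℝ × ℝ)} (hα : ↑α ⊆ S1 ∪ S2) (hne : α.Nonempty) :
    1 / 4 + 1 / (12 * (#α : ℝ) ^ 2) ≤ distortion α := by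
  have hD := continuous_minSqDist hne
  have hint : IntervalIntegrable (fun x : ℝ => 3 * min x (2 - x) ^ 2) volume 0 2 :=
    Continuous.intervalIntegrable (by fun_prop) _ _
  have hquant := cube_div_le_integral_of_exists_sq_le (α.image baseCenter) zero_le_two
    (g := fun x => 4 * minSqDist α x - 3 * min x (2 - x) ^ 2)
    (((hD.const_mul 4).intervalIntegrable 0 2).sub hint) fun x hx => by
      obtain ⟨p, hp, hDp⟩ := exists_mem_minSqDist_eq hne x
      refine ⟨baseCenter p, Finset.mem_image_of_mem _ hp, ?_⟩
      simpa only [hDp] using sq_sub_baseCenter_le (hα hp) (Ioo_subset_Icc_self hx)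
  rw [integral_sub ((hD.const_mul 4).intervalIntegrable 0 2) hint,
    intervalIntegral.integral_const_mul, intervalIntegral.integral_const_mul,
    integral_min_sub_sq] at hquant
  have hcard : 2 / (3 * (#α : ℝ) ^ 2) ≤ 2 / (3 * (#(α.image baseCenter) : ℝ) ^ 2) := by
    gcongr
    exact Finset.card_image_le
  have hcube : (2 - 0 : ℝ) ^ 3 / (12 * (#(α.image baseCenter) : ℝ) ^ 2)
      = 2 / (3 * (#(α.image baseCenter) : ℝ) ^ 2) := by ring
  have hscale : 1 / (12 * (#α : ℝ) ^ 2) = 1 / 8 * (2 / (3 * (#α : ℝ) ^ 2)) := by ring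
  rw [distortion_eq_integral_minSqDist]
  linarith

lemma integral_minSqDist_le {α : Finset (ℝ × ℝ)} {p : ℝ × ℝ} (hp : p ∈ α) {u v : ℝ}
    (huv : u ≤ v) :
    ∫ x in u..v, minSqDist α x ≤ ((v - p.1) ^ 3 - (u - p.1) ^ 3) / 3 + p.2 ^ 2 * (v - u) := by
  rw [← integral_sq_sub_add]
  exact integral_mono_on huv ((continuous_minSqDist ⟨p, hp⟩).intervalIntegrable _ _)
    (Continuous.intervalIntegrable (by fun_prop) _ _) fun x _ => minSqDist_le hp x

noncomputable def optimalFourPoints : Finset (ℝ × ℝ) :=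
  {((1/16 : ℝ), Real.sqrt 3 / 16), ((3/16 : ℝ), 3 * Real.sqrt 3 / 16),
    ((31/16 : ℝ), Real.sqrt 3 / 16), ((29/16 : ℝ), 3 * Real.sqrt 3 / 16)}

lemma optimalFourPoints_subset : ↑optimalFourPoints ⊆ S1 ∪ S2 := by
  intro p hp
  simp only [optimalFourPoints, Finset.coe_insert, Finset.coe_singleton, mem_insert_iff,
    mem_singleton_iff] at hp
  rcases hp with rfl | rfl | rfl | rfl
  · exact Or.inl ⟨1 / 16, by norm_num, by norm_num, Prod.ext rfl (by ring)⟩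
  · exact Or.inl ⟨3 / 16, by norm_num, by norm_num, Prod.ext rfl (by ring)⟩
  · exact Or.inr ⟨31 / 16, by norm_num, by norm_num, Prod.ext rfl (by ring)⟩
  · exact Or.inr ⟨29 / 16, by norm_num, by norm_num, Prod.ext rfl (by ring)⟩

lemma one_le_card_optimalFourPoints : 1 ≤ #optimalFourPoints :=
  Finset.card_pos.2 (Finset.insert_nonempty _ _)

-- Each cell `[k/2, (k+1)/2]` is charged to the point whose `baseCenter` `(2k+1)/4` lies in it.
lemma distortion_optimalFourPoints_le : distortion optimalFourPoints ≤ 49 / 192 := by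
  set α := optimalFourPoints
  have hD : ∀ a b : ℝ, IntervalIntegrable (minSqDist α) volume a b :=
    (continuous_minSqDist (Finset.insert_nonempty _ _)).intervalIntegrable
  have h1 : ∫ x in (0 : ℝ)..1 / 2, minSqDist α x ≤ 13 / 384 :=
    (integral_minSqDist_le (p := (1/16, Real.sqrt 3 / 16)) (by simp [α, optimalFourPoints])
      (by norm_num)).trans_eq (by norm_num [div_pow])
  have h2 : ∫ x in (1 / 2 : ℝ)..1, minSqDist α x ≤ 85 / 384 :=
    (integral_minSqDist_le (p := (3/16, 3 * Real.sqrt 3 / 16)) (by simp [α, optimalFourPoints])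
      (by norm_num)).trans_eq (by norm_num [div_pow, mul_pow])
  have h3 : ∫ x in (1 : ℝ)..3 / 2, minSqDist α x ≤ 85 / 384 :=
    (integral_minSqDist_le (p := (29/16, 3 * Real.sqrt 3 / 16)) (by simp [α, optimalFourPoints])
      (by norm_num)).trans_eq (by norm_num [div_pow, mul_pow])
  have h4 : ∫ x in (3 / 2 : ℝ)..2, minSqDist α x ≤ 13 / 384 :=
    (integral_minSqDist_le (p := (31/16, Real.sqrt 3 / 16)) (by simp [α, optimalFourPoints])
      (by norm_num)).trans_eq (by norm_num [div_pow])
  rw [distortion_eq_integral_minSqDist, ← integral_add_adjacent_intervals (hD 0 1) (hD 1 2),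
    ← integral_add_adjacent_intervals (hD 0 (1 / 2)) (hD (1 / 2) 1),
    ← integral_add_adjacent_intervals (hD 1 (3 / 2)) (hD (3 / 2) 2)]
  linarith

lemma distortion_ge_of_card_le_four {α : Finset (ℝ × ℝ)} (hα : ↑α ⊆ S1 ∪ S2) (h1 : 1 ≤ #α)
    (h4 : #α ≤ 4) : 49 / 192 ≤ distortion α := by
  have hlow := quarter_add_le_distortion hα (Finset.card_pos.1 h1)
  have hinv : (1 : ℝ) / (12 * 4 ^ 2) ≤ 1 / (12 * (#α : ℝ) ^ 2) := by
    gcongr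
    exact_mod_cast h4
  linarith

/-- The optimal set of four points and V₄ = 49/192. -/
theorem stmt8 :
    V 4 = 49/192 ∧
    distortion {((1/16 : ℝ), Real.sqrt 3 / 16), ((3/16 : ℝ), 3 * Real.sqrt 3 / 16),
      ((31/16 : ℝ), Real.sqrt 3 / 16), ((29/16 : ℝ), 3 * Real.sqrt 3 / 16)} = 49/192 := by
  have hopt : distortion optimalFourPoints = 49 / 192 :=
    le_antisymm distortion_optimalFourPoints_le (distortion_ge_of_card_le_four
      optimalFourPoints_subset one_le_card_optimalFourPoints Finset.card_le_four)
  refine ⟨IsLeast.csInf_eq ⟨⟨optimalFourPoints, optimalFourPoints_subset,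
    one_le_card_optimalFourPoints, Finset.card_le_four, hopt.symm⟩, ?_⟩, hopt⟩
  rintro _ ⟨β, hβ, h1, h4, rfl⟩
  exact distortion_ge_of_card_le_four hβ h1 h4
end

section
/- For n ≥ 3, if all n points lie on side OB at positions aᵢ = (2i-1)u/2, then the distortion error as a function of u equals -(4/3)n(2n²-3n+1)u³ + (1-2n)²u² - 2nu + u + 4/3, which is minimized at u = 1/(2n) with minimum value 1/(12n²) + 1. -/
/-! Each Voronoi cell contributes the integral of a shifted square plus a constant, so the
error is a cubic polynomial in `u`. Subtracting the claimed minimum, this cubic factors as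
`(2n - 1) (2nu - 1)² (2n + 1 - 4n(n - 1)u) / (12n²)`, with a double root at `u = 1/(2n)`;
the last factor is nonnegative as soon as the last Voronoi boundary `4(n - 1)u` is at most `2`. -/

lemma integral_sub_sq_add_const (a b c d : ℝ) :
    ∫ x in a..b, ((x - c)^2 + d) = ((b - c)^3 - (a - c)^3)/3 + d*(b - a) := by
  have h_sq : ∫ x in a..b, (x - c)^2 = ((b - c)^3 - (a - c)^3)/3 := by
    rw [intervalIntegral.integral_comp_sub_right (fun x => x^2) c, integral_pow]
    ring
  rw [intervalIntegral.integral_add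
      ((by fun_prop : Continuous fun x : ℝ => (x - c)^2).intervalIntegrable a b)
      intervalIntegrable_const, h_sq, intervalIntegral.integral_const, smul_eq_mul]
  ring

lemma sum_Icc_cell_integrals (u : ℝ) (m : ℕ) :
    (∑ i ∈ Finset.Icc 1 m, ∫ x in (4*((i:ℝ) - 1)*u)..(4*(i:ℝ)*u),
        ((x - (2*(i:ℝ) - 1)*u/2)^2 + 3*((2*(i:ℝ) - 1)*u/2)^2))
      = (16*(m:ℝ)^3 - 4*(m:ℝ) + 16*(m:ℝ)/3) * u^3 := by
  induction m with
  | zero => simp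
  | succ m ih =>
    rw [Finset.sum_Icc_succ_top (by omega), ih, integral_sub_sq_add_const]
    push_cast
    ring

noncomputable def errorCubic (n u : ℝ) : ℝ :=
  -(4/3)*n*(2*n^2 - 3*n + 1)*u^3 + (1 - 2*n)^2*u^2 - 2*n*u + u + 4/3

lemma errorCubic_sub_min (n u : ℝ) (hn : n ≠ 0) :
    errorCubic n u - (1/(12*n^2) + 1)
      = (2*n - 1)*(2*n*u - 1)^2*(2*n + 1 - 4*n*(n - 1)*u) / (12*n^2) := by
  unfold errorCubic
  field_simp
  ring

lemma errorCubic_inv_two_mul (n : ℝ) (hn : n ≠ 0) :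
    errorCubic n (1/(2*n)) = 1/(12*n^2) + 1 := by
  have h_root : 2*n*(1/(2*n)) - 1 = 0 := by field_simp; ring
  rw [← sub_eq_zero, errorCubic_sub_min n _ hn, h_root]
  ring

lemma min_le_errorCubic {n u : ℝ} (hn : 1 ≤ n) (hbd : 4*(n - 1)*u ≤ 2) :
    1/(12*n^2) + 1 ≤ errorCubic n u := by
  have h_last : 0 ≤ 2*n + 1 - 4*n*(n - 1)*u := by nlinarith
  have h_diff : 0 ≤ errorCubic n u - (1/(12*n^2) + 1) := by
    rw [errorCubic_sub_min n u (by positivity)]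
    have : 0 ≤ 2*n - 1 := by linarith
    positivity
  linarith

/-- With all n points on side OB at aᵢ = (2i-1)u/2, the distortion error as a function
of u equals -(4/3)n(2n²-3n+1)u³ + (1-2n)²u² - 2nu + u + 4/3, minimized at u = 1/(2n)
with minimum value 1/(12n²) + 1. -/
theorem stmt9 (n : ℕ) (hn : 3 ≤ n) :
    let E : ℝ → ℝ := fun u =>
      (1/2) * ((∑ i ∈ Finset.Icc 1 (n - 1), ∫ x in (4*((i:ℝ) - 1)*u)..(4*(i:ℝ)*u),
          ((x - (2*(i:ℝ) - 1)*u/2)^2 + 3*((2*(i:ℝ) - 1)*u/2)^2)) +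
        ∫ x in (4*((n:ℝ) - 1)*u)..(2:ℝ),
          ((x - (2*(n:ℝ) - 1)*u/2)^2 + 3*((2*(n:ℝ) - 1)*u/2)^2))
    (∀ u : ℝ, E u = -(4/3)*(n:ℝ)*(2*(n:ℝ)^2 - 3*(n:ℝ) + 1)*u^3
        + (1 - 2*(n:ℝ))^2*u^2 - 2*(n:ℝ)*u + u + 4/3) ∧
    E (1/(2*(n:ℝ))) = 1/(12*(n:ℝ)^2) + 1 ∧
    (∀ u : ℝ, 0 < u → 4*((n:ℝ) - 1)*u ≤ 2 → 1/(12*(n:ℝ)^2) + 1 ≤ E u) := by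
  intro E
  have hn_one : (1:ℝ) ≤ n := by exact_mod_cast (by omega : 1 ≤ n)
  have hE : ∀ u, E u = errorCubic n u := by
    intro u
    change (1/2) * _ = _
    rw [sum_Icc_cell_integrals, integral_sub_sq_add_const, Nat.cast_pred (by omega), errorCubic]
    ring
  refine ⟨hE, ?_, fun u hu hbd => ?_⟩
  · rw [hE, errorCubic_inv_two_mul _ (by positivity)]
  · rw [hE]
    exact min_le_errorCubic hn_one hbd
end

section
/- For n ≥ 2, any optimal set of n points for the uniform distribution on [0,2] with constraint S₁ ∪ S₂ contains at least one point from each of S₁ and S₂. -/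
open scoped Classical

/-! A set inside one side `S1` (resp. `S2`) stays at squared distance at least `3x²/4`
(resp. `3(2-x)²/4`) from the base point `(x,0)`, the squared distance to the line through that
side, so its distortion is at least `1`. The two endpoints `(0,0)`, `(2,0)` of the base already
have distortion at most `2/3`, hence `V n < 1` for `n ≥ 2`, and an optimal set cannot lie in
a single side. -/

open Set

section Distortion

variable {α : Finset (ℝ × ℝ)}

lemma distortion_eq_integral_inf' (hα : α.Nonempty) :
    distortion α = (1/2) * ∫ x in (0:ℝ)..2, α.inf' hα (fun p => (x - p.1)^2 + p.2^2) := by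
  simp only [distortion, Finset.inf'_eq_csInf_image]

lemma continuous_inf'_sqDist (hα : α.Nonempty) :
    Continuous fun x : ℝ => α.inf' hα (fun p => (x - p.1)^2 + p.2^2) :=
  Continuous.finset_inf'_apply hα fun _ _ => by fun_prop

lemma integral_le_distortion {g : ℝ → ℝ} (hg : Continuous g) (hα : α.Nonempty)
    (h : ∀ x ∈ Icc (0:ℝ) 2, ∀ p ∈ α, g x ≤ (x - p.1)^2 + p.2^2) :
    (1/2) * ∫ x in (0:ℝ)..2, g x ≤ distortion α := by
  rw [distortion_eq_integral_inf' hα]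
  gcongr
  exact intervalIntegral.integral_mono_on (by norm_num) (hg.intervalIntegrable _ _)
    ((continuous_inf'_sqDist hα).intervalIntegrable _ _)
    fun x hx => (Finset.le_inf'_iff _ _).2 (h x hx)

lemma distortion_le_integral {g : ℝ → ℝ} (hg : Continuous g) (hα : α.Nonempty)
    (h : ∀ x ∈ Icc (0:ℝ) 2, ∃ p ∈ α, (x - p.1)^2 + p.2^2 ≤ g x) :
    distortion α ≤ (1/2) * ∫ x in (0:ℝ)..2, g x := by
  rw [distortion_eq_integral_inf' hα]
  gcongr
  exact intervalIntegral.integral_mono_on (by norm_num)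
    ((continuous_inf'_sqDist hα).intervalIntegrable _ _) (hg.intervalIntegrable _ _)
    fun x hx => (Finset.inf'_le_iff hα).2 (h x hx)

lemma distortion_nonneg (hα : α.Nonempty) : 0 ≤ distortion α := by
  simpa using integral_le_distortion continuous_const hα fun x _ p _ => by positivity

end Distortion

lemma three_div_four_mul_sq_le_sqDist_line (x a : ℝ) :
    3/4 * x^2 ≤ (x - a)^2 + (Real.sqrt 3 * a)^2 := by
  rw [mul_pow, Real.sq_sqrt (by norm_num)]
  nlinarith [sq_nonneg (4*a - x)]

lemma sqDist_ge_of_mem_S1 (x : ℝ) {p : ℝ × ℝ} (hp : p ∈ S1) :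
    3/4 * x^2 ≤ (x - p.1)^2 + p.2^2 := by
  obtain ⟨a, -, -, rfl⟩ := hp
  exact three_div_four_mul_sq_le_sqDist_line x a

lemma sqDist_ge_of_mem_S2 (x : ℝ) {p : ℝ × ℝ} (hp : p ∈ S2) :
    3/4 * (2 - x)^2 ≤ (x - p.1)^2 + p.2^2 := by
  obtain ⟨a, -, -, rfl⟩ := hp
  have := three_div_four_mul_sq_le_sqDist_line (2 - x) (2 - a)
  simp only
  linear_combination this

lemma one_le_distortion_of_subset_S1 {α : Finset (ℝ × ℝ)} (hα : α.Nonempty) (h : ↑α ⊆ S1) :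
    1 ≤ distortion α := by
  have hint : (1/2) * ∫ x in (0:ℝ)..2, 3/4 * x^2 = 1 := by
    rw [intervalIntegral.integral_const_mul, integral_pow]
    norm_num
  rw [← hint]
  exact integral_le_distortion (by fun_prop) hα fun x _ p hp => sqDist_ge_of_mem_S1 x (h hp)

lemma one_le_distortion_of_subset_S2 {α : Finset (ℝ × ℝ)} (hα : α.Nonempty) (h : ↑α ⊆ S2) :
    1 ≤ distortion α := by
  have hint : (1/2) * ∫ x in (0:ℝ)..2, 3/4 * (2 - x)^2 = 1 := by
    rw [intervalIntegral.integral_const_mul,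
      intervalIntegral.integral_comp_sub_left (fun x : ℝ => x^2), integral_pow]
    norm_num
  rw [← hint]
  exact integral_le_distortion (by fun_prop) hα fun x _ p hp => sqDist_ge_of_mem_S2 x (h hp)

-- `min (x, 2 - x)² ≤ x (2 - x) = 2x - x²` on `[0, 2]`.
lemma distortion_base_endpoints_le :
    distortion {((0:ℝ), (0:ℝ)), ((2:ℝ), (0:ℝ))} ≤ 2/3 := by
  have hint : (1/2) * ∫ x in (0:ℝ)..2, (2 * x - x^2) = 2/3 := by
    rw [intervalIntegral.integral_sub (intervalIntegral.intervalIntegrable_id.const_mul 2)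
      (intervalIntegral.intervalIntegrable_pow 2), intervalIntegral.integral_const_mul,
      integral_id, integral_pow]
    norm_num
  rw [← hint]
  refine distortion_le_integral (by fun_prop) (by simp) fun x ⟨hx0, hx2⟩ => ?_
  rcases le_total x 1 with hx | hx
  · exact ⟨(0, 0), by simp, by simp only; nlinarith⟩
  · exact ⟨(2, 0), by simp, by simp only; nlinarith⟩

lemma V_le_two_div_three {n : ℕ} (hn : 2 ≤ n) : V n ≤ 2/3 := by
  have hbdd : BddBelow {v | ∃ α : Finset (ℝ × ℝ),
      ↑α ⊆ S1 ∪ S2 ∧ 1 ≤ α.card ∧ α.card ≤ n ∧ v = distortion α} := by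
    refine ⟨0, ?_⟩
    rintro v ⟨β, -, hβ, -, rfl⟩
    exact distortion_nonneg (Finset.card_pos.mp hβ)
  have hcard : ({((0:ℝ), (0:ℝ)), ((2:ℝ), (0:ℝ))} : Finset (ℝ × ℝ)).card = 2 :=
    Finset.card_pair (by simp)
  refine (csInf_le hbdd ⟨_, ?_, hcard ▸ one_le_two, hcard.le.trans hn, rfl⟩).trans
    distortion_base_endpoints_le
  intro p hp
  simp only [Finset.coe_insert, Finset.coe_singleton, mem_insert_iff, mem_singleton_iff] at hp
  rcases hp with rfl | rfl
  · exact Or.inl ⟨0, le_rfl, zero_le_one, by simp⟩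
  · exact Or.inr ⟨2, one_le_two, le_rfl, by simp⟩

theorem stmt11_general (n : ℕ) (hn : 2 ≤ n) (α : Finset (ℝ × ℝ))
    (hS : ↑α ⊆ S1 ∪ S2) (h1 : 1 ≤ α.card)
    (hopt : distortion α = V n) :
    ((α : Set (ℝ × ℝ)) ∩ S1).Nonempty ∧ ((α : Set (ℝ × ℝ)) ∩ S2).Nonempty := by
  have hne : α.Nonempty := Finset.card_pos.mp h1
  have hlt : distortion α < 1 := hopt ▸ (V_le_two_div_three hn).trans_lt (by norm_num)
  constructor
  · by_contra h
    refine hlt.not_ge (one_le_distortion_of_subset_S2 hne fun p hp => ?_)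
    exact (hS hp).resolve_left fun hp1 => h ⟨p, hp, hp1⟩
  · by_contra h
    refine hlt.not_ge (one_le_distortion_of_subset_S1 hne fun p hp => ?_)
    exact (hS hp).resolve_right fun hp2 => h ⟨p, hp, hp2⟩

/-- For n ≥ 2, any optimal set of n points contains points from both S1 and S2. -/
theorem stmt11 (n : ℕ) (hn : 2 ≤ n) (α : Finset (ℝ × ℝ))
    (hS : ↑α ⊆ S1 ∪ S2) (h1 : 1 ≤ α.card) (h2 : α.card ≤ n)
    (hopt : distortion α = V n) :
    ((α : Set (ℝ × ℝ)) ∩ S1).Nonempty ∧ ((α : Set (ℝ × ℝ)) ∩ S2).Nonempty :=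
  stmt11_general n hn α hS h1 hopt
end

section
/- The limit as ℓ → ∞ of 1/( 24ℓ/√(156ℓ²+13) + 1/(-12ℓ²-1) + 25/13 ) equals 1/(4√(3/13) + 25/13), and this limit is strictly greater than 49/192. -/
open Filter Topology

lemma tendsto_div_sqrt_mul_sq_add_atTop {a : ℝ} (ha : 0 < a) (b : ℝ) :
    Tendsto (fun x : ℝ => x / √(a * x ^ 2 + b)) atTop (𝓝 (1 / √a)) := by
  have hlim : Tendsto (fun x : ℝ => 1 / √(a + b / x ^ 2)) atTop (𝓝 (1 / √a)) := by
    have hb : Tendsto (fun x : ℝ => b / x ^ 2) atTop (𝓝 0) :=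
      tendsto_const_nhds.div_atTop (tendsto_pow_atTop two_ne_zero)
    have hsqrt : Tendsto (fun x : ℝ => √(a + b / x ^ 2)) atTop (𝓝 √a) := by
      simpa using (tendsto_const_nhds.add hb).sqrt
    exact tendsto_const_nhds.div hsqrt (Real.sqrt_pos.mpr ha).ne'
  refine hlim.congr' ?_
  filter_upwards [eventually_gt_atTop 0] with x hx
  have hsplit : √(a * x ^ 2 + b) = x * √(a + b / x ^ 2) := by
    rw [show a * x ^ 2 + b = x ^ 2 * (a + b / x ^ 2) by field_simp, Real.sqrt_mul (by positivity),
      Real.sqrt_sq hx.le]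
  rw [hsplit, div_mul_cancel_left₀ hx.ne', one_div]

lemma four_mul_sqrt_three_div_thirteen : 4 * √(3 / 13) = 24 * (1 / √156) := by
  have h : √(3 / 13) * √156 = 6 := by
    rw [← Real.sqrt_mul (by norm_num), show (3 / 13 * 156 : ℝ) = 6 ^ 2 by norm_num,
      Real.sqrt_sq (by norm_num)]
  field_simp
  linear_combination 4 * h

lemma sqrt_three_div_thirteen_lt : √(3 / 13) < 49 / 100 := by
  rw [Real.sqrt_lt' (by norm_num)]
  norm_num

/-- The limit as ℓ → ∞ of 1/(24ℓ/√(156ℓ²+13) + 1/(-12ℓ²-1) + 25/13) equals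
1/(4√(3/13) + 25/13), which is strictly greater than 49/192 = V₄. -/
theorem stmt13 :
    Filter.Tendsto
      (fun ℓ : ℕ => 1/(24*(ℓ:ℝ)/Real.sqrt (156*(ℓ:ℝ)^2 + 13) + 1/(-12*(ℓ:ℝ)^2 - 1) + 25/13))
      Filter.atTop (nhds (1/(4*Real.sqrt (3/13) + 25/13))) ∧
    (49/192 : ℝ) < 1/(4*Real.sqrt (3/13) + 25/13) := by
  have hden : 0 < 4 * √(3 / 13) + 25 / 13 := by positivity
  refine ⟨?_, ?_⟩
  · have hsq : Tendsto (fun x : ℝ => -12 * x ^ 2 - 1) atTop atBot :=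
      tendsto_atBot_add_const_right _ _
        ((tendsto_pow_atTop two_ne_zero).const_mul_atTop_of_neg (by norm_num))
    have hrecip : Tendsto (fun x : ℝ => 1 / (-12 * x ^ 2 - 1)) atTop (𝓝 0) := by
      simpa only [one_div, Pi.inv_def] using hsq.inv_tendsto_atBot
    have hinner := (((tendsto_div_sqrt_mul_sq_add_atTop (by norm_num : (0 : ℝ) < 156) 13).const_mul
      24).add hrecip).add_const (25 / 13)
    rw [← four_mul_sqrt_three_div_thirteen, add_zero] at hinner
    refine (tendsto_const_nhds.div hinner hden.ne').comp tendsto_natCast_atTop_atTop |>.congr ?_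
    intro ℓ
    simp only [Function.comp_apply, Pi.div_apply, mul_div_assoc]
  · rw [lt_div_iff₀ hden]
    nlinarith [sqrt_three_div_thirteen_lt]
end
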